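/- arXiv:2007.05034 — 2 statements merged into one kernel-verified Lean document; each statement's English description precedes it below -/
import Mathlib

section
/- Let A ∈ ℝ^{n×n} be Hurwitz (every eigenvalue has negative real part) and Q ∈ ℝ^{n×n} be positive semidefinite. Then X = ∫₀^∞ e^{At} Q e^{Aᵀt} dt is well-defined, positive semidefinite, and satisfies A X + X Aᵀ + Q = 0. -/
open Matrix
open scoped Matrix.Norms.L2Operator

/-- A real square matrix is Hurwitz if all its complex eigenvalues have
strictly negative real part. -/
def IsHurwitz {n : ℕ} (A : Matrix (Fin n) (Fin n) ℝ) : Prop :=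
  ∀ μ ∈ spectrum ℂ (A.map (algebraMap ℝ ℂ)), μ.re < 0

namespace LyapunovAux

open NormedSpace MeasureTheory Filter Module
open scoped NNReal ENNReal Pointwise

variable {n : ℕ}

/-- The `ℚ`-normed algebra structure on matrices (L2 operator norm). -/
def ratNormedAlg (𝕜 : Type*) [RCLike 𝕜] : NormedAlgebra ℚ (Matrix (Fin n) (Fin n) 𝕜) :=
  { (inferInstance : Algebra ℚ (Matrix (Fin n) (Fin n) 𝕜)) with
    norm_smul_le := fun q x => by
      rw [← Rat.cast_smul_eq_qsmul 𝕜 q x, norm_smul, ← RCLike.ofReal_ratCast, RCLike.norm_ofReal,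
        ← Real.norm_eq_abs, Rat.norm_cast_real] }

/-- Applying `exp` to an eigenvector. -/
lemma mulVec_exp_of_eig (M : Matrix (Fin n) (Fin n) ℂ) {v : Fin n → ℂ} {c : ℂ}
    (h : M *ᵥ v = c • v) : exp M *ᵥ v = Complex.exp c • v := by
  classical
  have hpow : ∀ k : ℕ, (M ^ k) *ᵥ v = c ^ k • v := by
    intro k
    induction k with
    | zero => simp
    | succ k ih =>
      rw [pow_succ, ← Matrix.mulVec_mulVec, h, Matrix.mulVec_smul, ih, smul_smul, ← pow_succ']
  let φ : Matrix (Fin n) (Fin n) ℂ →ₗ[ℂ] (Fin n → ℂ) :=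
    { toFun := fun N => N *ᵥ v
      map_add' := fun N₁ N₂ => Matrix.add_mulVec N₁ N₂ v
      map_smul' := fun a N => Matrix.smul_mulVec a N v }
  let φL : Matrix (Fin n) (Fin n) ℂ →L[ℂ] (Fin n → ℂ) :=
    ⟨φ, φ.continuous_of_finiteDimensional⟩
  have hsum : Summable (fun k : ℕ => ((k.factorial : ℂ))⁻¹ • M ^ k) := expSeries_summable' M
  have h1 : exp M *ᵥ v = ∑' k : ℕ, ((k.factorial : ℂ))⁻¹ • (c ^ k • v) := by
    have h2 : φL (exp M) = ∑' k : ℕ, φL (((k.factorial : ℂ))⁻¹ • M ^ k) := by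
      rw [exp_eq_tsum (𝕂 := ℂ)]
      exact φL.map_tsum hsum
    have h3 : ∀ k : ℕ, φL (((k.factorial : ℂ))⁻¹ • M ^ k) = ((k.factorial : ℂ))⁻¹ • (c ^ k • v) := by
      intro k
      rw [_root_.map_smul]
      show ((k.factorial : ℂ))⁻¹ • ((M ^ k) *ᵥ v) = _
      rw [hpow]
    calc exp M *ᵥ v = φL (exp M) := rfl
      _ = ∑' k : ℕ, φL (((k.factorial : ℂ))⁻¹ • M ^ k) := h2
      _ = ∑' k : ℕ, ((k.factorial : ℂ))⁻¹ • (c ^ k • v) := tsum_congr h3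
  rw [h1]
  have hc : Summable (fun k : ℕ => ((k.factorial : ℂ))⁻¹ * c ^ k) := by
    simpa [smul_eq_mul] using expSeries_summable' (𝕂 := ℂ) (𝔸 := ℂ) c
  calc ∑' k : ℕ, ((k.factorial : ℂ))⁻¹ • (c ^ k • v)
      = ∑' k : ℕ, (((k.factorial : ℂ))⁻¹ * c ^ k) • v := by
        simp only [smul_smul]
    _ = (∑' k : ℕ, ((k.factorial : ℂ))⁻¹ * c ^ k) • v := by
        exact (hc.tsum_smul_const v)
    _ = Complex.exp c • v := by
        congr 1
        rw [Complex.exp_eq_exp_ℂ, exp_eq_tsum (𝕂 := ℂ)]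
        simp [smul_eq_mul]

/-- Spectral mapping (the hard direction) for the matrix exponential. -/
lemma exists_exp_eq_of_mem_spectrum_exp [NeZero n] (B : Matrix (Fin n) (Fin n) ℂ) {μ : ℂ}
    (hμ : μ ∈ spectrum ℂ (exp B)) : ∃ z ∈ spectrum ℂ B, Complex.exp z = μ := by
  classical
  set e := Matrix.toLinAlgEquiv' (R := ℂ) (n := Fin n) with he
  set g : Module.End ℂ (Fin n → ℂ) := e (exp B) with hgdef
  set f : Module.End ℂ (Fin n → ℂ) := e B with hfdef
  have hμ' : μ ∈ spectrum ℂ g := by rw [hgdef, AlgEquiv.spectrum_eq]; exact hμ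
  have hev : g.HasEigenvalue μ := Module.End.hasEigenvalue_iff_mem_spectrum.mpr hμ'
  obtain ⟨v₀, hv₀⟩ := hev.exists_hasEigenvector
  have hcomm : Commute g f := by
    have : Commute (exp B) B := ((Commute.refl B).exp_left)
    exact this.map e
  set W := g.maxGenEigenspace μ with hWdef
  have hW : Set.MapsTo f W W := Module.End.mapsTo_maxGenEigenspace_of_comm hcomm μ
  have hv₀W : v₀ ∈ W := by
    rw [hWdef, Module.End.mem_maxGenEigenspace]
    refine ⟨1, ?_⟩
    have := hv₀.apply_eq_smul
    simp [pow_one, LinearMap.sub_apply, this]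
  haveI : Nontrivial W := nontrivial_of_ne ⟨v₀, hv₀W⟩ 0 (by
    intro h
    exact hv₀.2 (by simpa [Submodule.mk_eq_zero] using h))
  obtain ⟨lam, hlam⟩ := Module.End.exists_eigenvalue (f.restrict hW)
  obtain ⟨w', hw'⟩ := hlam.exists_hasEigenvector
  set w : Fin n → ℂ := (w' : Fin n → ℂ) with hwdef
  have hw0 : w ≠ 0 := fun h => hw'.2 (Subtype.ext h)
  have hfw : f w = lam • w := by
    have h1 := hw'.apply_eq_smul
    have : ((f.restrict hW) w' : Fin n → ℂ) = f w := LinearMap.restrict_coe_apply f hW w'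
    rw [← this, h1]
    rfl
  have hBw : B *ᵥ w = lam • w := by
    simpa [hfdef, he, Matrix.toLinAlgEquiv'_apply, Matrix.toLin'_apply] using hfw
  have hgw : g w = Complex.exp lam • w := by
    have := mulVec_exp_of_eig B hBw
    simpa [hgdef, he, Matrix.toLinAlgEquiv'_apply, Matrix.toLin'_apply] using this
  refine ⟨lam, ?_, ?_⟩
  · rw [← AlgEquiv.spectrum_eq e, ← Module.End.hasEigenvalue_iff_mem_spectrum]
    exact Module.End.hasEigenvalue_of_hasEigenvector
      ⟨Module.End.mem_eigenspace_iff.mpr hfw, hw0⟩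
  · obtain ⟨k, hk⟩ := (Module.End.mem_maxGenEigenspace _ _ _).mp w'.2
    have hiter : ∀ j : ℕ, ((g - μ • (1 : Module.End ℂ (Fin n → ℂ))) ^ j) w
        = (Complex.exp lam - μ) ^ j • w := by
      intro j
      induction j with
      | zero => simp
      | succ j ih =>
        rw [pow_succ, Module.End.mul_apply]
        have hstep : (g - μ • (1 : Module.End ℂ (Fin n → ℂ))) w
            = (Complex.exp lam - μ) • w := by
          simp [LinearMap.sub_apply, hgw, sub_smul]
        rw [hstep, _root_.map_smul, ih, smul_smul, ← pow_succ']
    rw [hiter k] at hk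
    rcases eq_or_ne k 0 with rfl | hkne
    · simp at hk
      exact absurd hk hw0
    · have hzero : (Complex.exp lam - μ) ^ k = 0 := by
        by_contra hne
        exact hw0 (by simpa [smul_eq_zero, hne] using hk)
      have := pow_eq_zero_iff hkne |>.mp hzero
      exact sub_eq_zero.mp this

/-- Exponential decay of `‖exp (t • A)‖` for a Hurwitz matrix. -/
lemma exp_decay [NeZero n] (A : Matrix (Fin n) (Fin n) ℝ) (hA : IsHurwitz A) :
    ∃ C > (0:ℝ), ∃ ε > (0:ℝ), ∀ t : ℝ, 0 ≤ t →
      ‖NormedSpace.exp (t • A)‖ ≤ C * Real.exp (-(ε * t)) := by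
  classical
  letI := ratNormedAlg (n := n) ℝ
  letI := ratNormedAlg (n := n) ℂ
  set B : Matrix (Fin n) (Fin n) ℂ := A.map (algebraMap ℝ ℂ) with hBdef
  haveI : Nontrivial (Matrix (Fin n) (Fin n) ℂ) := inferInstance
  have hspec_compact : IsCompact (spectrum ℂ B) := spectrum.isCompact B
  have hne : (spectrum ℂ B).Nonempty := spectrum.nonempty B
  obtain ⟨μ₀, hμ₀mem, hμ₀max⟩ :=
    hspec_compact.exists_isMaxOn hne Complex.continuous_re.continuousOn
  set ε : ℝ := -μ₀.re / 2 with hεdef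
  have hε : 0 < ε := by have := hA μ₀ hμ₀mem; simp only [hεdef]; linarith
  have hspec_le : ∀ μ ∈ spectrum ℂ B, μ.re ≤ -(2*ε) := by
    intro μ hμ
    have h2 : μ.re ≤ μ₀.re := hμ₀max hμ
    simp only [hεdef]
    linarith
  set B' : Matrix (Fin n) (Fin n) ℂ := B + (ε : ℂ) • (1 : Matrix (Fin n) (Fin n) ℂ) with hB'def
  have hspecB' : ∀ lam ∈ spectrum ℂ B', lam.re ≤ -ε := by
    intro lam hlam
    have hset : lam ∈ ({(ε:ℂ)} : Set ℂ) + spectrum ℂ B := by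
      rw [spectrum.singleton_add_eq]
      have : (algebraMap ℂ (Matrix (Fin n) (Fin n) ℂ)) (ε:ℂ) + B = B' := by
        rw [Algebra.algebraMap_eq_smul_one, hB'def, add_comm]
      rwa [this]
    rw [Set.singleton_add] at hset
    obtain ⟨b, hb, rfl⟩ := hset
    have := hspec_le b hb
    simp only [Complex.add_re, Complex.ofReal_re]
    linarith
  set X : Matrix (Fin n) (Fin n) ℂ := NormedSpace.exp B' with hXdef
  have hXspec : ∀ z ∈ spectrum ℂ X, ‖z‖₊ < (1:ℝ≥0) := by
    intro z hz
    obtain ⟨lam, hlam, rfl⟩ := exists_exp_eq_of_mem_spectrum_exp B' hz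
    have hre : lam.re < 0 := lt_of_le_of_lt (hspecB' lam hlam) (by linarith)
    have : ‖Complex.exp lam‖ < 1 := by
      rw [Complex.norm_exp]
      exact Real.exp_lt_one_iff.mpr hre
    exact_mod_cast this
  have hrad : spectralRadius ℂ X < 1 := by
    have := spectrum.spectralRadius_lt_of_forall_lt (a := X) hXspec
    simpa using this
  have htend := spectrum.pow_nnnorm_pow_one_div_tendsto_nhds_spectralRadius X
  have hev : ∀ᶠ k : ℕ in atTop, ((‖X ^ k‖₊ : ℝ≥0∞) ^ (1 / (k:ℝ)) < 1 ∧ 1 ≤ k) := by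
    refine ((htend.eventually_lt_const hrad).and (eventually_ge_atTop 1))
  obtain ⟨N, hN⟩ := Filter.eventually_atTop.mp hev
  have hpow_le : ∀ k ≥ N, ‖X ^ k‖ ≤ 1 := by
    intro k hk
    obtain ⟨h1, h2⟩ := hN k hk
    have hkpos : (0:ℝ) < (k:ℝ) := by exact_mod_cast h2
    have hx : (‖X ^ k‖₊ : ℝ≥0∞) = ((‖X ^ k‖₊ : ℝ≥0∞) ^ (1 / (k:ℝ))) ^ (k:ℝ) := by
      rw [← ENNReal.rpow_mul, one_div, inv_mul_cancel₀ hkpos.ne', ENNReal.rpow_one]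
    have : (‖X ^ k‖₊ : ℝ≥0∞) ≤ 1 := by
      rw [hx]
      calc ((‖X ^ k‖₊ : ℝ≥0∞) ^ (1 / (k:ℝ))) ^ (k:ℝ)
          ≤ (1:ℝ≥0∞) ^ (k:ℝ) := ENNReal.rpow_le_rpow h1.le hkpos.le
        _ = 1 := ENNReal.one_rpow _
    have h1' : ‖X ^ k‖₊ ≤ 1 := by exact_mod_cast this
    exact_mod_cast h1'
  set C₀ : ℝ := 1 + ∑ j ∈ Finset.range N, ‖X ^ j‖ with hC₀def
  have hC₀pos : 0 < C₀ := by
    have : (0:ℝ) ≤ ∑ j ∈ Finset.range N, ‖X ^ j‖ :=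
      Finset.sum_nonneg fun j _ => norm_nonneg _
    linarith
  have hC₀ : ∀ k : ℕ, ‖X ^ k‖ ≤ C₀ := by
    intro k
    rcases lt_or_ge k N with hkN | hkN
    · have : ‖X ^ k‖ ≤ ∑ j ∈ Finset.range N, ‖X ^ j‖ :=
        Finset.single_le_sum (f := fun j => ‖X ^ j‖) (fun j _ => norm_nonneg _)
          (Finset.mem_range.mpr hkN)
      linarith
    · have h1 := hpow_le k hkN
      have : (0:ℝ) ≤ ∑ j ∈ Finset.range N, ‖X ^ j‖ :=
        Finset.sum_nonneg fun j _ => norm_nonneg _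
      linarith
  have hcontexp : Continuous fun s : ℝ => NormedSpace.exp ((s:ℂ) • B') :=
    NormedSpace.exp_continuous.comp (Complex.continuous_ofReal.smul continuous_const)
  obtain ⟨M, hM⟩ := (isCompact_Icc (a := (0:ℝ)) (b := 1)).exists_bound_of_continuousOn
    hcontexp.continuousOn
  have hM0 : 0 ≤ M := le_trans (norm_nonneg _) (hM 0 (by norm_num))
  have key : ∀ t : ℝ, 0 ≤ t → ‖NormedSpace.exp ((t:ℂ) • B')‖ ≤ C₀ * M := by
    intro t ht
    have hsplit : (t:ℂ) • B' = ((⌊t⌋₊ : ℂ)) • B' + (((t - ⌊t⌋₊ : ℝ) : ℂ)) • B' := by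
      rw [← add_smul]
      congr 1
      push_cast
      ring
    have hcomm : Commute (((⌊t⌋₊ : ℂ)) • B') ((((t - ⌊t⌋₊ : ℝ) : ℂ)) • B') :=
      ((Commute.refl B').smul_left _).smul_right _
    rw [hsplit, NormedSpace.exp_add_of_commute hcomm]
    have hnat : ((⌊t⌋₊ : ℂ)) • B' = (⌊t⌋₊ : ℕ) • B' := (Nat.cast_smul_eq_nsmul ℂ _ _)
    rw [hnat, NormedSpace.exp_nsmul]
    have hs1 : (0:ℝ) ≤ t - ⌊t⌋₊ := sub_nonneg.mpr (Nat.floor_le ht)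
    have hs2 : t - ⌊t⌋₊ ≤ 1 := by
      have := Nat.lt_floor_add_one t
      linarith
    calc ‖X ^ ⌊t⌋₊ * NormedSpace.exp (((t - ⌊t⌋₊ : ℝ) : ℂ) • B')‖
        ≤ ‖X ^ ⌊t⌋₊‖ * ‖NormedSpace.exp (((t - ⌊t⌋₊ : ℝ) : ℂ) • B')‖ := norm_mul_le _ _
      _ ≤ C₀ * M := by
          apply mul_le_mul (hC₀ _) (hM _ ⟨hs1, hs2⟩) (norm_nonneg _) hC₀pos.le
  have hrel : ∀ t : ℝ, NormedSpace.exp ((t:ℂ) • B)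
      = Real.exp (-(ε * t)) • NormedSpace.exp ((t:ℂ) • B') := by
    intro t
    have hsplit : (t:ℂ) • B = (t:ℂ) • B' + ((-(ε * t) : ℝ) : ℂ) • (1 : Matrix (Fin n) (Fin n) ℂ) := by
      rw [hB'def]
      rw [smul_add]
      rw [add_assoc, smul_smul, ← add_smul]
      have : (t:ℂ) * (ε:ℂ) + ((-(ε * t) : ℝ) : ℂ) = 0 := by push_cast; ring
      rw [this, zero_smul, add_zero]
    have hcomm : Commute ((t:ℂ) • B') (((-(ε * t) : ℝ) : ℂ) • (1 : Matrix (Fin n) (Fin n) ℂ)) :=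
      ((Commute.one_right _).smul_left _).smul_right _
    rw [hsplit, NormedSpace.exp_add_of_commute hcomm]
    have hone : NormedSpace.exp (((-(ε * t) : ℝ) : ℂ) • (1 : Matrix (Fin n) (Fin n) ℂ))
        = (Complex.exp ((-(ε * t) : ℝ) : ℂ)) • (1 : Matrix (Fin n) (Fin n) ℂ) := by
      rw [← Algebra.algebraMap_eq_smul_one, ← Algebra.algebraMap_eq_smul_one]
      rw [← NormedSpace.algebraMap_exp_comm, Complex.exp_eq_exp_ℂ]
    rw [hone]
    rw [mul_smul_comm, mul_one]
    have : Complex.exp ((-(ε * t) : ℝ) : ℂ) = ((Real.exp (-(ε * t)) : ℝ) : ℂ) := by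
      rw [Complex.ofReal_exp]
    rw [this]
    ext i j
    simp [Complex.real_smul]
  have hmap : ∀ t : ℝ, (NormedSpace.exp (t • A)).map (algebraMap ℝ ℂ)
      = NormedSpace.exp ((t:ℂ) • B) := by
    intro t
    set ψ : Matrix (Fin n) (Fin n) ℝ →ₐ[ℝ] Matrix (Fin n) (Fin n) ℂ :=
      (AlgHom.mapMatrix (Algebra.ofId ℝ ℂ)) with hψdef
    have hψcont : Continuous ψ := ψ.toLinearMap.continuous_of_finiteDimensional
    have h1 : ψ (NormedSpace.exp (t • A)) = NormedSpace.exp (ψ (t • A)) :=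
      map_exp ψ hψcont (t • A)
    have h2 : ψ (t • A) = t • B := by
      rw [_root_.map_smul]
      rfl
    have h3 : (NormedSpace.exp : Matrix (Fin n) (Fin n) ℂ → _) = NormedSpace.exp :=
      rfl
    have h4 : (t:ℂ) • B = t • B := by
      ext i j
      simp [Complex.real_smul]
    calc (NormedSpace.exp (t • A)).map (algebraMap ℝ ℂ) = ψ (NormedSpace.exp (t • A)) := rfl
      _ = NormedSpace.exp (t • B) := by rw [h1, h2]
      _ = NormedSpace.exp ((t:ℂ) • B) := by rw [h3, h4]
  -- real part extraction
  set ρ : Matrix (Fin n) (Fin n) ℂ →ₗ[ℝ] Matrix (Fin n) (Fin n) ℝ :=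
    { toFun := fun M => M.map Complex.re
      map_add' := by
        intro M N
        ext i j
        simp [Matrix.map_apply]
      map_smul' := by
        intro r M
        ext i j
        simp [Matrix.map_apply, Complex.real_smul] } with hρdef
  set ρL : Matrix (Fin n) (Fin n) ℂ →L[ℝ] Matrix (Fin n) (Fin n) ℝ :=
    ⟨ρ, ρ.continuous_of_finiteDimensional⟩ with hρLdef
  have hρid : ∀ M : Matrix (Fin n) (Fin n) ℝ, ρL (M.map (algebraMap ℝ ℂ)) = M := by
    intro M
    ext i j
    show ((M.map (algebraMap ℝ ℂ)).map Complex.re) i j = M i j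
    simp [Matrix.map_apply]
  refine ⟨max 1 (‖ρL‖ * (C₀ * M)), lt_max_of_lt_left one_pos, ε, hε, ?_⟩
  intro t ht
  have h1 : NormedSpace.exp (t • A) = ρL (NormedSpace.exp ((t:ℂ) • B)) := by
    rw [← hmap t, hρid]
  rw [h1, hrel t]
  calc ‖ρL (Real.exp (-(ε * t)) • NormedSpace.exp ((t:ℂ) • B'))‖
      ≤ ‖ρL‖ * ‖Real.exp (-(ε * t)) • NormedSpace.exp ((t:ℂ) • B')‖ := ρL.le_opNorm _
    _ = ‖ρL‖ * (Real.exp (-(ε * t)) * ‖NormedSpace.exp ((t:ℂ) • B')‖) := by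
        rw [norm_smul, Real.norm_eq_abs, abs_of_pos (Real.exp_pos _)]
    _ ≤ ‖ρL‖ * (Real.exp (-(ε * t)) * (C₀ * M)) := by
        have hk := key t ht
        gcongr
    _ = (‖ρL‖ * (C₀ * M)) * Real.exp (-(ε * t)) := by ring
    _ ≤ max 1 (‖ρL‖ * (C₀ * M)) * Real.exp (-(ε * t)) := by
        gcongr
        exact le_max_right _ _

end LyapunovAux

open MeasureTheory Filter Topology in
/-- For `A` Hurwitz and `Q ⪰ 0`, the matrix
`X = ∫₀^∞ e^{At} Q e^{Aᵀt} dt` is well-defined (the integrand is integrable),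
positive semidefinite, and satisfies the Lyapunov equation `A X + X Aᵀ + Q = 0`. -/
theorem lyapunov_integral_solution
    {n : ℕ} (A Q : Matrix (Fin n) (Fin n) ℝ)
    (hA : IsHurwitz A) (hQ : Q.PosSemidef) :
    MeasureTheory.IntegrableOn
        (fun t : ℝ => NormedSpace.exp (t • A) * Q * NormedSpace.exp (t • Aᵀ))
        (Set.Ioi 0) ∧
    (∫ t in Set.Ioi (0 : ℝ),
        NormedSpace.exp (t • A) * Q * NormedSpace.exp (t • Aᵀ)).PosSemidef ∧
    A * (∫ t in Set.Ioi (0 : ℝ),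
          NormedSpace.exp (t • A) * Q * NormedSpace.exp (t • Aᵀ)) +
      (∫ t in Set.Ioi (0 : ℝ),
          NormedSpace.exp (t • A) * Q * NormedSpace.exp (t • Aᵀ)) * Aᵀ + Q = 0 := by
  classical
  rcases Nat.eq_zero_or_pos n with hn | hn
  · subst hn
    have hfun : (fun t : ℝ => NormedSpace.exp (t • A) * Q * NormedSpace.exp (t • Aᵀ))
        = fun _ : ℝ => (0 : Matrix (Fin 0) (Fin 0) ℝ) := funext fun t => Subsingleton.elim _ _
    refine ⟨?_, ?_, ?_⟩
    · rw [hfun]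
      exact (integrable_zero _ _ _).integrableOn
    · constructor
      · exact Subsingleton.elim _ _
      · intro x
        rw [Subsingleton.elim x 0]
        simp
    · exact Subsingleton.elim _ _
  · haveI : NeZero n := ⟨hn.ne'⟩
    letI := LyapunovAux.ratNormedAlg (n := n) ℝ
    obtain ⟨C, hC, ε, hε, hbound⟩ := LyapunovAux.exp_decay A hA
    set g : ℝ → Matrix (Fin n) (Fin n) ℝ :=
      fun t => NormedSpace.exp (t • A) * Q * NormedSpace.exp (t • Aᵀ) with hgdef
    have hAT : ∀ t : ℝ, NormedSpace.exp (t • Aᵀ) = (NormedSpace.exp (t • A))ᵀ := by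
      intro t
      rw [← Matrix.transpose_smul, Matrix.exp_transpose]
    have htrans_eq : ∀ M : Matrix (Fin n) (Fin n) ℝ, Mᵀ = Mᴴ := by
      intro M
      ext i j
      simp [Matrix.conjTranspose_apply]
    have hnormT : ∀ t : ℝ, ‖NormedSpace.exp (t • Aᵀ)‖ = ‖NormedSpace.exp (t • A)‖ := by
      intro t
      rw [hAT t, htrans_eq, Matrix.l2_opNorm_conjTranspose]
    have hcont : Continuous g := by
      have h1 : Continuous fun t : ℝ => NormedSpace.exp (t • A) :=
        NormedSpace.exp_continuous.comp (continuous_id.smul continuous_const)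
      have h2 : Continuous fun t : ℝ => NormedSpace.exp (t • Aᵀ) :=
        NormedSpace.exp_continuous.comp (continuous_id.smul continuous_const)
      exact (h1.mul continuous_const).mul h2
    have hgbound : ∀ t : ℝ, 0 ≤ t →
        ‖g t‖ ≤ C * C * ‖Q‖ * Real.exp (-(2 * ε) * t) := by
      intro t ht
      have h1 : ‖g t‖ ≤ ‖NormedSpace.exp (t • A)‖ * ‖Q‖ * ‖NormedSpace.exp (t • Aᵀ)‖ :=
        le_trans (norm_mul_le _ _) (by gcongr; exact norm_mul_le _ _)
      rw [hnormT t] at h1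
      have h2 := hbound t ht
      calc ‖g t‖ ≤ ‖NormedSpace.exp (t • A)‖ * ‖Q‖ * ‖NormedSpace.exp (t • A)‖ := h1
        _ ≤ (C * Real.exp (-(ε * t))) * ‖Q‖ * (C * Real.exp (-(ε * t))) := by
            gcongr
        _ = C * C * ‖Q‖ * Real.exp (-(2 * ε) * t) := by
            rw [show -(2 * ε) * t = -(ε * t) + -(ε * t) by ring, Real.exp_add]
            ring
    have hdom : IntegrableOn (fun t : ℝ => C * C * ‖Q‖ * Real.exp (-(2 * ε) * t))
        (Set.Ioi (0:ℝ)) := by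
      exact (exp_neg_integrableOn_Ioi 0 (by positivity)).const_mul _
    have hint : IntegrableOn g (Set.Ioi (0:ℝ)) := by
      refine Integrable.mono' hdom hcont.aestronglyMeasurable.restrict ?_
      rw [ae_restrict_iff' measurableSet_Ioi]
      exact ae_of_all _ fun t ht => hgbound t (le_of_lt ht)
    -- the combined linear map M ↦ A * M + M * Aᵀ
    set L : Matrix (Fin n) (Fin n) ℝ →ₗ[ℝ] Matrix (Fin n) (Fin n) ℝ :=
      LinearMap.mulLeft ℝ A + LinearMap.mulRight ℝ Aᵀ with hLdef
    set LC : Matrix (Fin n) (Fin n) ℝ →L[ℝ] Matrix (Fin n) (Fin n) ℝ :=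
      ⟨L, L.continuous_of_finiteDimensional⟩ with hLCdef
    have hLC_apply : ∀ M : Matrix (Fin n) (Fin n) ℝ, LC M = A * M + M * Aᵀ := by
      intro M
      show L M = _
      simp [hLdef, LinearMap.mulLeft_apply, LinearMap.mulRight_apply]
    have hint' : IntegrableOn (fun t : ℝ => A * g t + g t * Aᵀ) (Set.Ioi (0:ℝ)) := by
      have := LC.integrable_comp hint
      simp only [hLC_apply] at this
      exact this
    have hderiv : ∀ t : ℝ, HasDerivAt g (A * g t + g t * Aᵀ) t := by
      intro t
      have h1 : HasDerivAt (fun u : ℝ => NormedSpace.exp (u • A))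
          (A * NormedSpace.exp (t • A)) t := hasDerivAt_exp_smul_const' A t
      have h2 : HasDerivAt (fun u : ℝ => NormedSpace.exp (u • Aᵀ))
          (NormedSpace.exp (t • Aᵀ) * Aᵀ) t := hasDerivAt_exp_smul_const Aᵀ t
      have h3 : HasDerivAt (fun u : ℝ => NormedSpace.exp (u • A) * Q)
          (A * NormedSpace.exp (t • A) * Q) t := h1.mul_const Q
      have h4 := h3.mul h2
      have heq : A * g t + g t * Aᵀ
          = A * NormedSpace.exp (t • A) * Q * NormedSpace.exp (t • Aᵀ)
            + NormedSpace.exp (t • A) * Q * (NormedSpace.exp (t • Aᵀ) * Aᵀ) := by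
        show A * (NormedSpace.exp (t • A) * Q * NormedSpace.exp (t • Aᵀ))
            + (NormedSpace.exp (t • A) * Q * NormedSpace.exp (t • Aᵀ)) * Aᵀ = _
        simp only [mul_assoc]
      rw [heq]
      exact h4
    have htends : Tendsto g atTop (𝓝 0) := by
      refine squeeze_zero_norm'
        (a := fun t : ℝ => C * C * ‖Q‖ * Real.exp (-(2 * ε) * t)) ?_ ?_
      · filter_upwards [eventually_ge_atTop (0:ℝ)] with t ht
        exact hgbound t ht
      · have h5 : Tendsto (fun t : ℝ => (2 * ε) * t) atTop atTop :=
          Tendsto.const_mul_atTop (by positivity) tendsto_id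
        have h6 : Tendsto (fun t : ℝ => Real.exp (-(2 * ε) * t)) atTop (𝓝 0) := by
          have hfun2 : (fun t : ℝ => Real.exp (-(2 * ε) * t))
              = (fun x : ℝ => Real.exp (-x)) ∘ (fun t : ℝ => (2 * ε) * t) := by
            funext t
            simp [Function.comp, neg_mul]
          rw [hfun2]
          exact Real.tendsto_exp_neg_atTop_nhds_zero.comp h5
        have := h6.const_mul (C * C * ‖Q‖)
        simpa [mul_comm] using this
    have hg0 : g 0 = Q := by
      simp [hgdef, zero_smul, NormedSpace.exp_zero]
    have hFTC : ∫ t in Set.Ioi (0:ℝ), (A * g t + g t * Aᵀ) = 0 - g 0 :=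
      MeasureTheory.integral_Ioi_of_hasDerivAt_of_tendsto
        hcont.continuousWithinAt (fun t _ => hderiv t) hint' htends
    set X : Matrix (Fin n) (Fin n) ℝ := ∫ t in Set.Ioi (0:ℝ), g t with hXdef
    have hLXeq : A * X + X * Aᵀ = -Q := by
      have h7 := LC.integral_comp_comm hint
      simp only [hLC_apply] at h7
      calc A * X + X * Aᵀ = ∫ t in Set.Ioi (0:ℝ), (A * g t + g t * Aᵀ) := h7.symm
        _ = 0 - g 0 := hFTC
        _ = -Q := by rw [hg0]; simp
    refine ⟨hint, ?_, ?_⟩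
    · -- PosSemidef
      refine Matrix.posSemidef_iff_dotProduct_mulVec.mpr ⟨?_, ?_⟩
      · -- Hermitian
        show Xᴴ = X
        rw [← htrans_eq]
        set T : Matrix (Fin n) (Fin n) ℝ →ₗ[ℝ] Matrix (Fin n) (Fin n) ℝ :=
          { toFun := fun M => Mᵀ
            map_add' := fun M N => Matrix.transpose_add M N
            map_smul' := fun r M => Matrix.transpose_smul r M } with hTdef
        set TC : Matrix (Fin n) (Fin n) ℝ →L[ℝ] Matrix (Fin n) (Fin n) ℝ :=
          ⟨T, T.continuous_of_finiteDimensional⟩ with hTCdef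
        have hT_apply : ∀ M, TC M = Mᵀ := fun M => rfl
        have h9 : (∫ t in Set.Ioi (0:ℝ), TC (g t)) = TC X := TC.integral_comp_comm hint
        have h10 : ∀ t : ℝ, TC (g t) = g t := by
          intro t
          rw [hT_apply]
          show (NormedSpace.exp (t • A) * Q * NormedSpace.exp (t • Aᵀ))ᵀ = _
          rw [Matrix.transpose_mul, Matrix.transpose_mul, hAT t, Matrix.transpose_transpose]
          have hQT : Qᵀ = Q := by
            rw [htrans_eq]
            exact hQ.1
          rw [hQT, ← hAT t]
          simp [hgdef, mul_assoc]
        calc Xᵀ = TC X := rfl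
          _ = ∫ t in Set.Ioi (0:ℝ), TC (g t) := h9.symm
          _ = ∫ t in Set.Ioi (0:ℝ), g t := by
              congr 1
              funext t
              exact h10 t
          _ = X := rfl
      · -- quadratic form
        intro x
        set q : Matrix (Fin n) (Fin n) ℝ →ₗ[ℝ] ℝ :=
          { toFun := fun M => dotProduct (star x) (M *ᵥ x)
            map_add' := by
              intro M N
              simp [Matrix.add_mulVec, dotProduct_add]
            map_smul' := by
              intro r M
              simp [Matrix.smul_mulVec, dotProduct_smul] } with hqdef
        set qC : Matrix (Fin n) (Fin n) ℝ →L[ℝ] ℝ :=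
          ⟨q, q.continuous_of_finiteDimensional⟩ with hqCdef
        have hq_apply : ∀ M, qC M = dotProduct (star x) (M *ᵥ x) := fun M => rfl
        have h11 : (∫ t in Set.Ioi (0:ℝ), qC (g t)) = qC X := qC.integral_comp_comm hint
        have h12 : ∀ t : ℝ, 0 ≤ qC (g t) := by
          intro t
          rw [hq_apply]
          set y : Fin n → ℝ := NormedSpace.exp (t • Aᵀ) *ᵥ x with hydef
          have hsx : star x = x := funext fun i => by simp
          have hsy : star y = y := funext fun i => by simp
          have hvm : x ᵥ* NormedSpace.exp (t • A) = y := by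
            rw [hydef, show NormedSpace.exp (t • A) = (NormedSpace.exp (t • Aᵀ))ᵀ by
              rw [hAT t, Matrix.transpose_transpose]]
            exact Matrix.vecMul_transpose _ _
          have : dotProduct (star x) (g t *ᵥ x) = dotProduct (star y) (Q *ᵥ y) := by
            rw [hsx, hsy]
            show dotProduct x
              ((NormedSpace.exp (t • A) * Q * NormedSpace.exp (t • Aᵀ)) *ᵥ x) = _
            rw [← Matrix.mulVec_mulVec, ← Matrix.mulVec_mulVec]
            rw [Matrix.dotProduct_mulVec, hvm, ← hydef]
          rw [this]
          exact hQ.dotProduct_mulVec_nonneg y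
        rw [hq_apply X] at h11
        rw [← h11]
        exact MeasureTheory.setIntegral_nonneg measurableSet_Ioi fun t _ => h12 t
    · -- Lyapunov equation
      show A * X + X * Aᵀ + Q = 0
      rw [hLXeq]
      simp
end

section
/- Let M ∈ ℝ^{n×n} be Hurwitz and Q ⪰ 0 with trace(Q) > 0. For g > 0, let X_g be the unique solution of X((1/(2g))I + M)ᵀ + ((1/(2g))I + M)X + Q = 0, assuming (1/(2g))I + M is Hurwitz, and let X' be the unique solution of X'Mᵀ + MX' + Q = 0. Then trace(X_g) ≥ trace(X') > 0. -/
open Matrix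

section LyapunovAux

set_option maxHeartbeats 1000000

open NormedSpace Filter Topology Finset
attribute [local instance] Matrix.linftyOpNormedRing Matrix.linftyOpNormedAlgebra

variable {n : ℕ}

/-- the linear map `M ↦ M *ᵥ v`, continuous. -/
noncomputable def mulVecCLM (v : Fin n → ℂ) :
    Matrix (Fin n) (Fin n) ℂ →L[ℂ] (Fin n → ℂ) :=
  LinearMap.toContinuousLinearMap
    { toFun := fun M => M *ᵥ v
      map_add' := fun M N => Matrix.add_mulVec M N v
      map_smul' := fun c M => Matrix.smul_mulVec c M v }

lemma exp_mulVec_genEig (B : Matrix (Fin n) (Fin n) ℂ) (μ : ℂ) (m : ℕ) (v : Fin n → ℂ)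
    (hv : ((B - μ • 1) ^ m) *ᵥ v = 0) (t : ℂ) :
    exp (t • B) *ᵥ v
      = ∑ k ∈ range m, (Complex.exp (t * μ) * t ^ k * (k.factorial : ℂ)⁻¹) •
          ((B - μ • 1) ^ k *ᵥ v) := by
  set N := B - μ • 1 with hN
  have hsplit : t • B = (t * μ) • (1 : Matrix (Fin n) (Fin n) ℂ) + t • N := by
    rw [hN]; rw [smul_sub, smul_smul]; ring_nf; abel
  have hcomm : Commute ((t * μ) • (1 : Matrix (Fin n) (Fin n) ℂ)) (t • N) :=
    (Commute.one_left _).smul_left _ |>.smul_right _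
  have h1 : exp ((t * μ) • (1 : Matrix (Fin n) (Fin n) ℂ))
      = Complex.exp (t * μ) • (1 : Matrix (Fin n) (Fin n) ℂ) := by
    have : ((t*μ) • (1 : Matrix (Fin n) (Fin n) ℂ)) = algebraMap ℂ _ (t*μ) := by
      simp [Algebra.algebraMap_eq_smul_one]
    erw [this, ← map_exp (algebraMap ℂ (Matrix (Fin n) (Fin n) ℂ)) (continuous_algebraMap _ _),
      Algebra.algebraMap_eq_smul_one, ← Complex.exp_eq_exp_ℂ]
  have hexp : exp (t • B) = Complex.exp (t * μ) • exp (t • N) := by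
    rw [hsplit, Matrix.exp_add_of_commute _ _ hcomm, h1, smul_mul_assoc, one_mul]
  rw [hexp]
  have hser : exp (t • N) *ᵥ v = ∑' k : ℕ, (k.factorial : ℂ)⁻¹ • ((t • N) ^ k *ᵥ v) := by
    have := (mulVecCLM v).map_tsum (expSeries_summable' (𝕂 := ℂ) (t • N))
    rw [exp_eq_tsum ℂ] at *
    simpa [mulVecCLM, Matrix.smul_mulVec] using this
  have hterm : ∀ k : ℕ, (k.factorial : ℂ)⁻¹ • ((t • N) ^ k *ᵥ v)
      = (t ^ k * (k.factorial : ℂ)⁻¹) • (N ^ k *ᵥ v) := by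
    intro k
    rw [smul_pow, Matrix.smul_mulVec, smul_smul, mul_comm]
  have hzero : ∀ k ∉ range m, (k.factorial : ℂ)⁻¹ • ((t • N) ^ k *ᵥ v) = 0 := by
    intro k hk
    rw [mem_range, not_lt] at hk
    have : N ^ k *ᵥ v = 0 := by
      rw [← Nat.sub_add_cancel hk, pow_add, ← Matrix.mulVec_mulVec, hv, Matrix.mulVec_zero]
    rw [hterm, this, smul_zero]
  rw [Matrix.smul_mulVec, hser, tsum_eq_sum hzero, Finset.smul_sum]
  refine Finset.sum_congr rfl fun k _ => ?_
  rw [hterm, smul_smul]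
  ring_nf

lemma tendsto_texp (c : ℝ) (hc : c < 0) (k : ℕ) :
    Tendsto (fun t : ℝ => Real.exp (t * c) * t ^ k) atTop (𝓝 0) := by
  have h1 : Tendsto (fun t : ℝ => -c * t) atTop atTop :=
    Tendsto.const_mul_atTop (by linarith) tendsto_id
  have h2 := (Real.tendsto_pow_mul_exp_neg_atTop_nhds_zero k).comp h1
  have h3 : Tendsto (fun t : ℝ => ((-c) ^ k)⁻¹ * ((-c * t) ^ k * Real.exp (-(-c * t))))
      atTop (𝓝 (((-c) ^ k)⁻¹ * 0)) := h2.const_mul _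
  rw [mul_zero] at h3
  refine h3.congr fun t => ?_
  have hck : ((-c) ^ k : ℝ) ≠ 0 := pow_ne_zero _ (by linarith)
  rw [mul_pow, ← mul_assoc, inv_mul_cancel_left₀ hck]
  ring_nf

lemma tendsto_coef (μ : ℂ) (hμ : μ.re < 0) (k : ℕ) :
    Tendsto (fun t : ℝ => Complex.exp ((t : ℂ) * μ) * (t : ℂ) ^ k * ((k.factorial : ℂ))⁻¹)
      atTop (𝓝 0) := by
  rw [tendsto_zero_iff_norm_tendsto_zero]
  have key := ((tendsto_texp μ.re hμ k).mul_const ((k.factorial : ℝ))⁻¹)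
  rw [zero_mul] at key
  refine squeeze_zero_norm' ?_ key
  filter_upwards [eventually_ge_atTop (0:ℝ)] with t ht
  rw [norm_norm, norm_mul, norm_mul,
    Complex.norm_exp]
  simp only [norm_pow, Complex.norm_real, Real.norm_eq_abs, norm_inv, Complex.norm_natCast]
  rw [abs_of_nonneg ht]
  have h2 : ((t:ℂ) * μ).re = t * μ.re := by simp
  rw [h2]

lemma tendsto_exp_mulVec (B : Matrix (Fin n) (Fin n) ℂ)
    (hB : ∀ μ ∈ spectrum ℂ B, μ.re < 0) (v : Fin n → ℂ) :
    Tendsto (fun t : ℝ => exp ((t : ℂ) • B) *ᵥ v) atTop (𝓝 0) := by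
  set f : Module.End ℂ (Fin n → ℂ) := Matrix.toLinAlgEquiv' B with hf
  have hv : v ∈ ⨆ μ : ℂ, f.maxGenEigenspace μ := by
    rw [Module.End.iSup_maxGenEigenspace_eq_top]; trivial
  refine Submodule.iSup_induction _ (motive := fun w => Tendsto (fun t : ℝ =>
      exp ((t : ℂ) • B) *ᵥ w) atTop (𝓝 0)) hv ?_ ?_ ?_
  · intro μ w hw
    rcases eq_or_ne w 0 with rfl | hw0
    · simpa using tendsto_const_nhds
    obtain ⟨m, hm⟩ := (Module.End.mem_maxGenEigenspace f μ w).mp hw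
    -- transfer to matrix form
    have hmat : ((B - μ • 1) ^ m) *ᵥ w = 0 := by
      have heq : (f - μ • 1) ^ m = Matrix.toLinAlgEquiv' ((B - μ • 1) ^ m) := by
        rw [map_pow, map_sub, _root_.map_smul, _root_.map_one]
      rw [heq] at hm
      rwa [Matrix.toLinAlgEquiv'_apply] at hm
    -- μ is an eigenvalue
    have hμ : μ.re < 0 := by
      apply hB
      have hgen : f.HasGenEigenvalue μ m := by
        rw [Module.End.hasGenEigenvalue_iff]
        refine Submodule.ne_bot_iff _ |>.mpr ⟨w, ?_, hw0⟩
        rw [Module.End.mem_genEigenspace_nat]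
        exact hm
      have := (Module.End.hasEigenvalue_iff_mem_spectrum).mp
        (Module.End.hasEigenvalue_of_hasGenEigenvalue hgen)
      rwa [hf, AlgEquiv.spectrum_eq] at this
    have hform := fun t : ℝ => exp_mulVec_genEig B μ m w hmat (t : ℂ)
    rw [show (fun t : ℝ => exp ((t : ℂ) • B) *ᵥ w) = fun t : ℝ =>
      ∑ k ∈ range m, (Complex.exp ((t:ℂ) * μ) * (t:ℂ) ^ k * ((k.factorial : ℂ))⁻¹) •
          ((B - μ • 1) ^ k *ᵥ w) from funext hform]
    have : Tendsto (fun t : ℝ => ∑ k ∈ range m,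
        (Complex.exp ((t:ℂ) * μ) * (t:ℂ) ^ k * ((k.factorial : ℂ))⁻¹) •
          ((B - μ • 1) ^ k *ᵥ w)) atTop (𝓝 (∑ k ∈ range m, (0:ℂ) • ((B - μ • 1) ^ k *ᵥ w))) := by
      refine tendsto_finset_sum _ fun k _ => ?_
      exact (tendsto_coef μ hμ k).smul_const _
    simpa using this
  · simpa using tendsto_const_nhds
  · intro x y hx hy
    have := hx.add hy
    simpa [Matrix.mulVec_add] using this

lemma tendsto_exp_real (A : Matrix (Fin n) (Fin n) ℝ)
    (hA : ∀ μ ∈ spectrum ℂ (A.map (algebraMap ℝ ℂ)), μ.re < 0) :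
    Tendsto (fun t : ℝ => exp (t • A)) atTop (𝓝 0) := by
  set Ac := A.map (algebraMap ℝ ℂ) with hAc
  have hmapc : Continuous ((algebraMap ℝ ℂ).mapMatrix :
      Matrix (Fin n) (Fin n) ℝ →+* Matrix (Fin n) (Fin n) ℂ) := by
    show Continuous fun M : Matrix (Fin n) (Fin n) ℝ => M.map (algebraMap ℝ ℂ)
    exact continuous_pi fun i => continuous_pi fun j =>
      Complex.continuous_ofReal.comp ((continuous_apply j).comp (continuous_apply i))
  have hmap : ∀ t : ℝ, (exp (t • A)).map (algebraMap ℝ ℂ) = exp ((t : ℂ) • Ac) := by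
    intro t
    have h1 : (exp (t • A)).map (algebraMap ℝ ℂ)
        = exp ((algebraMap ℝ ℂ).mapMatrix (t • A)) :=
      map_exp ((algebraMap ℝ ℂ).mapMatrix) hmapc (t • A)
    rw [h1]
    have h2 : ((algebraMap ℝ ℂ).mapMatrix (t • A) : Matrix (Fin n) (Fin n) ℂ)
        = (t : ℂ) • Ac := by
      ext i j
      simp [RingHom.mapMatrix_apply, hAc, Matrix.map_apply, Complex.real_smul]
    rw [h2]
  refine tendsto_pi_nhds.2 ?_
  intro i
  refine tendsto_pi_nhds.2 ?_
  intro j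
  have hentry : ∀ t : ℝ, exp (t • A) i j = ((exp ((t : ℂ) • Ac) *ᵥ Pi.single j 1) i).re := by
    intro t
    rw [← hmap t]
    simp [Matrix.mulVec_single, Matrix.map_apply]
  simp only [hentry]
  have hcol := tendsto_exp_mulVec Ac hA (Pi.single j 1)
  have : Tendsto (fun t : ℝ => ((exp ((t : ℂ) • Ac) *ᵥ Pi.single j 1) i)) atTop (𝓝 0) :=
    ((continuous_apply i).tendsto 0).comp hcol
  have := (Complex.continuous_re.tendsto 0).comp this
  exact this

noncomputable def quadCLM (v : Fin n → ℝ) : Matrix (Fin n) (Fin n) ℝ →L[ℝ] ℝ :=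
  LinearMap.toContinuousLinearMap
    { toFun := fun M => v ⬝ᵥ M *ᵥ v
      map_add' := fun M N => by simp [Matrix.add_mulVec, dotProduct_add]
      map_smul' := fun c M => by simp [Matrix.smul_mulVec, dotProduct_smul] }

@[simp] lemma quadCLM_apply (v : Fin n → ℝ) (M : Matrix (Fin n) (Fin n) ℝ) :
    quadCLM v M = v ⬝ᵥ M *ᵥ v := rfl

lemma quad_rewrite (E Y : Matrix (Fin n) (Fin n) ℝ) (v : Fin n → ℝ) :
    v ⬝ᵥ ((E * Y * Eᵀ) *ᵥ v) = (Eᵀ *ᵥ v) ⬝ᵥ (Y *ᵥ (Eᵀ *ᵥ v)) := by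
  rw [← Matrix.mulVec_mulVec, ← Matrix.mulVec_mulVec, Matrix.dotProduct_mulVec,
    ← Matrix.mulVec_transpose, Matrix.dotProduct_mulVec, Matrix.dotProduct_mulVec,
    ← Matrix.mulVec_transpose]

lemma lyap_key (A X P : Matrix (Fin n) (Fin n) ℝ)
    (hA : ∀ μ ∈ spectrum ℂ (A.map (algebraMap ℝ ℂ)), μ.re < 0)
    (heq : X * Aᵀ + A * X + P = 0) (hP : ∀ w, 0 ≤ w ⬝ᵥ P *ᵥ w) :
    (∀ v, 0 ≤ v ⬝ᵥ X *ᵥ v) ∧ (0 < P.trace → 0 < X.trace) := by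
  set E : ℝ → Matrix (Fin n) (Fin n) ℝ := fun t => exp (t • A) with hE
  have hAX : A * X + X * Aᵀ = -P := by
    rw [eq_neg_iff_add_eq_zero, ← heq]; abel
  have hcomm : ∀ t : ℝ, E t * A = A * E t := fun t =>
    (((Commute.refl A).smul_left t).exp_left)
  have hE0 : E 0 = 1 := by rw [hE]; simp [exp_zero]
  -- derivative of F t = E t * X * (E t)ᵀ
  have hF : ∀ t : ℝ, HasDerivAt (fun u => E u * X * (E u)ᵀ)
      (E t * (-P) * (E t)ᵀ) t := by
    intro t
    have h1 : HasDerivAt E (A * E t) t := hasDerivAt_exp_smul_const' A t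
    have h2 : HasDerivAt (fun u => E u * X) (A * E t * X) t := h1.mul_const X
    have h3 : HasDerivAt (fun u => (E u)ᵀ) ((A * E t)ᵀ) t := by
      let L : Matrix (Fin n) (Fin n) ℝ →L[ℝ] Matrix (Fin n) (Fin n) ℝ :=
        LinearMap.toContinuousLinearMap
          { toFun := fun M => Mᵀ
            map_add' := fun M N => Matrix.transpose_add M N
            map_smul' := fun c M => Matrix.transpose_smul c M }
      exact L.hasFDerivAt.comp_hasDerivAt t h1
    have h4 := h2.mul h3
    have expand : A * E t * X * (E t)ᵀ + E t * X * (A * E t)ᵀ = E t * (-P) * (E t)ᵀ := by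
      rw [← hcomm t, Matrix.transpose_mul, ← hAX]
      noncomm_ring
    rw [← expand]
    exact h4
  -- tendsto of F at top
  have hEtend : Tendsto E atTop (𝓝 0) := tendsto_exp_real A hA
  have hFtend : Tendsto (fun t => E t * X * (E t)ᵀ) atTop (𝓝 0) := by
    have h1 : Tendsto (fun t => E t * X) atTop (𝓝 (0 * X)) :=
      hEtend.mul tendsto_const_nhds
    have h2 : Tendsto (fun t => (E t)ᵀ) atTop (𝓝 (0 : Matrix (Fin n) (Fin n) ℝ)ᵀ) :=
      (Continuous.matrix_transpose continuous_id).tendsto 0 |>.comp hEtend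
    have := h1.mul h2
    simpa using this
  -- scalar functions
  have hasD : ∀ (v : Fin n → ℝ) (t : ℝ), HasDerivAt (fun u => quadCLM v (E u * X * (E u)ᵀ))
      (-(((E t)ᵀ *ᵥ v) ⬝ᵥ P *ᵥ ((E t)ᵀ *ᵥ v))) t := by
    intro v t
    have := ((quadCLM v).hasFDerivAt.comp_hasDerivAt t (hF t))
    convert this using 1
    · rfl
    · rfl
    · rfl
    show _ = v ⬝ᵥ (E t * -P * (E t)ᵀ) *ᵥ v
    rw [quad_rewrite]
    simp [Matrix.neg_mulVec, Matrix.mulVec_neg, dotProduct_neg]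
  have hanti : ∀ v : Fin n → ℝ, Antitone (fun u => quadCLM v (E u * X * (E u)ᵀ)) := by
    intro v
    refine antitone_of_deriv_nonpos (fun t => (hasD v t).differentiableAt) fun t => ?_
    rw [(hasD v t).deriv]
    simp only [neg_nonpos]
    exact hP _
  have htend : ∀ v : Fin n → ℝ, Tendsto (fun u => quadCLM v (E u * X * (E u)ᵀ)) atTop (𝓝 0) := by
    intro v
    have := ((quadCLM v).continuous.tendsto 0).comp hFtend
    simp at this
    exact this
  have hval0 : ∀ v : Fin n → ℝ, quadCLM v (E 0 * X * (E 0)ᵀ) = v ⬝ᵥ X *ᵥ v := by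
    intro v; rw [hE0]; simp
  have hnonneg : ∀ (v : Fin n → ℝ) (t : ℝ), 0 ≤ quadCLM v (E t * X * (E t)ᵀ) := by
    intro v t
    refine le_of_tendsto (htend v) ?_
    filter_upwards [eventually_ge_atTop t] with s hs
    exact hanti v hs
  constructor
  · intro v
    have := hnonneg v 0
    rwa [hval0] at this
  · -- trace part
    intro hPtr
    set H : ℝ → ℝ := fun t => ∑ i, quadCLM (Pi.single i 1) (E t * X * (E t)ᵀ) with hH
    have hHd : HasDerivAt H (∑ i : Fin n, -(((E 0)ᵀ *ᵥ Pi.single i 1) ⬝ᵥ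
        P *ᵥ ((E 0)ᵀ *ᵥ Pi.single i 1))) 0 := HasDerivAt.fun_sum fun i _ => hasD _ 0
    have hsingle : ∀ (M : Matrix (Fin n) (Fin n) ℝ) (i : Fin n),
        (Pi.single i 1 : Fin n → ℝ) ⬝ᵥ M *ᵥ Pi.single i 1 = M i i := by
      intro M i
      rw [Matrix.mulVec_single, single_dotProduct]
      simp
    have hderiv0 : HasDerivAt H (-P.trace) 0 := by
      convert hHd using 1
      rw [hE0]
      simp only [Matrix.transpose_one, Matrix.one_mulVec, hsingle]
      rw [Matrix.trace]
      simp [Matrix.diag]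
    have hH0 : H 0 = X.trace := by
      rw [hH]
      simp only [hval0, hsingle]
      rw [Matrix.trace]; simp [Matrix.diag]
    have hHnonneg : ∀ t, 0 ≤ H t := fun t => Finset.sum_nonneg fun i _ => hnonneg _ t
    have hslope := hasDerivAt_iff_tendsto_slope.mp hderiv0
    have hmono : 𝓝[>] (0:ℝ) ≤ 𝓝[≠] (0:ℝ) :=
      nhdsWithin_mono _ (fun x hx => ne_of_gt hx)
    have hev : ∀ᶠ t in 𝓝[>] (0:ℝ), slope H 0 t < 0 :=
      (hslope.eventually_lt_const (by linarith : -P.trace < 0)).filter_mono hmono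
    obtain ⟨t, hts, htpos⟩ := (hev.and self_mem_nhdsWithin).exists
    have htpos' : (0:ℝ) < t := htpos
    rw [slope_def_field] at hts
    have : (H t - H 0) / t < 0 := by simpa using hts
    have hlt : H t < H 0 := by
      have hnum : H t - H 0 < 0 := by
        by_contra hcon
        push_neg at hcon
        have := div_nonneg hcon (le_of_lt htpos')
        linarith
      linarith
    have := hHnonneg t
    rw [hH0] at hlt
    linarith

lemma trace_nonneg_of_qf {X : Matrix (Fin n) (Fin n) ℝ}
    (h : ∀ v, 0 ≤ v ⬝ᵥ X *ᵥ v) : 0 ≤ X.trace := by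
  rw [Matrix.trace]
  refine Finset.sum_nonneg fun i _ => ?_
  have := h (Pi.single i 1)
  rwa [Matrix.mulVec_single_one, single_dotProduct, one_mul] at this


end LyapunovAux

/-- Let `M` be Hurwitz, `Q ⪰ 0` with `trace Q > 0`, and `g > 0`.
If `(1/(2g))I + M` is Hurwitz, `X_g` solves
`X ((1/(2g))I + M)ᵀ + ((1/(2g))I + M) X + Q = 0` and `X'` solves
`X' Mᵀ + M X' + Q = 0`, then `trace X_g ≥ trace X' > 0`. -/
theorem trace_shifted_lyapunov_ge
    {n : ℕ} (g : ℝ) (hg : 0 < g)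
    (M Q Xg X' : Matrix (Fin n) (Fin n) ℝ)
    (hM : IsHurwitz M) (hQ : Q.PosSemidef) (hQtr : 0 < Q.trace)
    (hMg : IsHurwitz ((1 / (2 * g)) • (1 : Matrix (Fin n) (Fin n) ℝ) + M))
    (hXg : Xg * ((1 / (2 * g)) • (1 : Matrix (Fin n) (Fin n) ℝ) + M)ᵀ +
        ((1 / (2 * g)) • (1 : Matrix (Fin n) (Fin n) ℝ) + M) * Xg + Q = 0)
    (hX' : X' * Mᵀ + M * X' + Q = 0) :
    Xg.trace ≥ X'.trace ∧ 0 < X'.trace := by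
  set c : ℝ := 1 / (2 * g) with hc
  have hcpos : 0 < c := by positivity
  have hQqf : ∀ w, 0 ≤ w ⬝ᵥ Q *ᵥ w := by
    intro w
    have := hQ.dotProduct_mulVec_nonneg w
    simpa using this
  -- X' facts
  obtain ⟨hX'qf, hX'tr⟩ := lyap_key M X' Q hM hX' hQqf
  -- Xg quadratic form nonneg
  obtain ⟨hXgqf, -⟩ := lyap_key (c • 1 + M) Xg Q hMg hXg hQqf
  -- difference equation
  have hexp : Xg * Mᵀ + M * Xg + ((2 * c) • Xg + Q) = 0 := by
    have h1 := hXg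
    rw [Matrix.transpose_add, Matrix.transpose_smul, Matrix.transpose_one] at h1
    rw [Matrix.mul_add, Matrix.add_mul, mul_smul_comm, smul_mul_assoc,
      Matrix.mul_one, Matrix.one_mul] at h1
    rw [← h1]
    rw [show (2 * c) • Xg = c • Xg + c • Xg by rw [two_mul, add_smul]]
    abel
  have hDeq : (Xg - X') * Mᵀ + M * (Xg - X') + (2 * c) • Xg = 0 := by
    have h2 := hX'
    rw [Matrix.sub_mul, Matrix.mul_sub]
    have : Xg * Mᵀ - X' * Mᵀ + (M * Xg - M * X') + (2 * c) • Xg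
        = (Xg * Mᵀ + M * Xg + ((2 * c) • Xg + Q)) - (X' * Mᵀ + M * X' + Q) := by abel
    rw [this, hexp, h2, sub_zero]
  have hDP : ∀ w, 0 ≤ w ⬝ᵥ ((2 * c) • Xg) *ᵥ w := by
    intro w
    rw [Matrix.smul_mulVec, dotProduct_smul, smul_eq_mul]
    have := hXgqf w
    positivity
  obtain ⟨hDqf, -⟩ := lyap_key M (Xg - X') ((2 * c) • Xg) hM hDeq hDP
  have hDtr : 0 ≤ (Xg - X').trace := trace_nonneg_of_qf hDqf
  rw [Matrix.trace_sub] at hDtr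
  exact ⟨by linarith, hX'tr hQtr⟩
end
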